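/- arXiv:2510.13182 — 3 statements merged into one kernel-verified Lean document; each statement's English description precedes it below -/
import Mathlib

section
/- Under the assumptions w₁ᵀΣ₁₁w₁ ≤ Σ₃₃, w₁ᵀΣ₁₃ ≥ 0, (w*)ᵀΣ₂₂w* > 0, and the correlation condition ρ(w₁ᵀx₁, (w*)ᵀx₂) > ρ((w*)ᵀx₂, y) (all quantities defined from a centered jointly Gaussian (x₁, x₂, y) with w* = Σ₂₂⁻¹Σ₂₃), the quantity w₁ᵀ(Σ₁₃ - Σ₁₂w*) - (Σ₃₃ - (w*)ᵀΣ₂₂w*) is strictly negative. -/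
/-!
Cauchy–Schwarz for the positive semidefinite joint covariance gives `w₁ᵀΣ₁₃ ≤ αβ` and, since
`Σ₂₂w* = Σ₂₃`, also `σ ≤ β`, where `α, σ, β` are the standard deviations of `w₁ᵀx₁, (w*)ᵀx₂, y`.
The correlation condition says `w₁ᵀΣ₁₂w* > ασ²/β`, so the quantity is below
`αβ - ασ²/β - (β² - σ²) = (α/β - 1)(β² - σ²) ≤ 0`.
-/

open Matrix

theorem Matrix.PosSemidef.dotProduct_mulVec_sq_le {n : Type*} [Fintype n] {M : Matrix n n ℝ}
    (hM : M.PosSemidef) (u v : n → ℝ) :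
    (u ⬝ᵥ (M *ᵥ v)) ^ 2 ≤ (u ⬝ᵥ (M *ᵥ u)) * (v ⬝ᵥ (M *ᵥ v)) := by
  let := M.toSeminormedAddCommGroup hM
  let := M.toInnerProductSpace hM
  have h := real_inner_mul_inner_self_le u v
  -- the inner product induced by `M` is `⟪x, y⟫ = (M *ᵥ y) ⬝ᵥ x`
  change (M *ᵥ v) ⬝ᵥ u * ((M *ᵥ v) ⬝ᵥ u) ≤ (M *ᵥ u) ⬝ᵥ u * ((M *ᵥ v) ⬝ᵥ v) at h
  simpa only [dotProduct_comm _ u, dotProduct_comm _ v, sq] using h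

theorem Matrix.sumElim_dotProduct_fromBlocks_mulVec_sumElim {l m α : Type*} [Fintype l]
    [Fintype m] [CommSemiring α] (A : Matrix l l α) (B : Matrix l m α) (C : Matrix m l α)
    (D : Matrix m m α) (x₁ y₁ : l → α) (x₂ y₂ : m → α) :
    Sum.elim x₁ x₂ ⬝ᵥ (fromBlocks A B C D *ᵥ Sum.elim y₁ y₂) =
      x₁ ⬝ᵥ (A *ᵥ y₁) + x₁ ⬝ᵥ (B *ᵥ y₂) + x₂ ⬝ᵥ (C *ᵥ y₁) + x₂ ⬝ᵥ (D *ᵥ y₂) := by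
  simp only [fromBlocks_mulVec, Sum.elim_comp_inl, Sum.elim_comp_inr, sumElim_dotProduct_sumElim,
    dotProduct_add, add_assoc]

theorem Matrix.PosSemidef.sq_dotProduct_le_of_fromBlocks {m : Type*} [Fintype m]
    {A : Matrix m m ℝ} {v : m → ℝ} {c : ℝ}
    (h : (fromBlocks A (replicateCol Unit v) (replicateRow Unit v) (of fun _ _ => c)).PosSemidef)
    (x : m → ℝ) : (x ⬝ᵥ v) ^ 2 ≤ (x ⬝ᵥ (A *ᵥ x)) * c := by
  simpa [sumElim_dotProduct_fromBlocks_mulVec_sumElim, mulVec, dotProduct] using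
    h.dotProduct_mulVec_sq_le (Sum.elim x 0) (Sum.elim 0 1)

theorem sub_lt_sub_of_sqrt_div_sqrt_lt {A s c C D : ℝ} (hA : 0 < A) (hs : 0 < s)
    (hAc : A ≤ c) (hsc : s ≤ c) (hC : C ^ 2 ≤ A * c)
    (hD : √s / √c < D / (√A * √s)) : C - D < c - s := by
  have hc : 0 < c := hA.trans_le hAc
  obtain ⟨α, hα, rfl⟩ : ∃ α, 0 < α ∧ A = α ^ 2 := ⟨√A, by positivity, (Real.sq_sqrt hA.le).symm⟩
  obtain ⟨σ, hσ, rfl⟩ : ∃ σ, 0 < σ ∧ s = σ ^ 2 := ⟨√s, by positivity, (Real.sq_sqrt hs.le).symm⟩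
  obtain ⟨β, hβ, rfl⟩ : ∃ β, 0 < β ∧ c = β ^ 2 := ⟨√c, by positivity, (Real.sq_sqrt hc.le).symm⟩
  simp only [Real.sqrt_sq hα.le, Real.sqrt_sq hσ.le, Real.sqrt_sq hβ.le] at hD
  have hαβ : α ≤ β := (pow_le_pow_iff_left₀ hα.le hβ.le two_ne_zero).mp hAc
  have hCle : C ≤ α * β := abs_le_of_sq_le_sq' (by linarith) (by positivity) |>.2
  have hDgt : σ ^ 2 * α < D * β := by
    rw [div_lt_div_iff₀ hβ (by positivity)] at hD
    linarith
  -- β (C - D) < α (β² - σ²) ≤ β (β² - σ²)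
  nlinarith [mul_le_mul_of_nonneg_right hαβ (sub_nonneg.mpr hsc)]

theorem cch_condition_negative_general (p : ℕ)
    (S11 S12 S22 : Matrix (Fin p) (Fin p) ℝ) (hS22 : S22.PosDef)
    (S13 S23 : Fin p → ℝ) (S33 : ℝ)
    (hjoint : (Matrix.fromBlocks
        (Matrix.fromBlocks S11 S12 S12ᵀ S22)
        (Matrix.of fun i (_ : Unit) => Sum.elim S13 S23 i)
        (Matrix.of fun (_ : Unit) j => Sum.elim S13 S23 j)
        (Matrix.of fun (_ : Unit) (_ : Unit) => S33)).PosSemidef)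
    (w1 : Fin p → ℝ) (hw1pos : 0 < w1 ⬝ᵥ (S11 *ᵥ w1))
    (ws : Fin p → ℝ) (hws : ws = S22⁻¹ *ᵥ S23)
    (hbound : w1 ⬝ᵥ (S11 *ᵥ w1) ≤ S33)
    (hwspos : 0 < ws ⬝ᵥ (S22 *ᵥ ws))
    (hcorr : w1 ⬝ᵥ (S12 *ᵥ ws) /
        (Real.sqrt (w1 ⬝ᵥ (S11 *ᵥ w1)) * Real.sqrt (ws ⬝ᵥ (S22 *ᵥ ws)))
      > Real.sqrt (ws ⬝ᵥ (S22 *ᵥ ws)) / Real.sqrt S33) :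
    w1 ⬝ᵥ (S13 - S12 *ᵥ ws) - (S33 - ws ⬝ᵥ (S22 *ᵥ ws)) < 0 := by
  have hS22ws : S22 *ᵥ ws = S23 := by
    rw [hws, mulVec_mulVec, mul_nonsing_inv _ ((isUnit_iff_isUnit_det _).mp hS22.isUnit),
      one_mulVec]
  have hcs (x₁ x₂ : Fin p → ℝ) :=
    hjoint.sq_dotProduct_le_of_fromBlocks (v := Sum.elim S13 S23) (Sum.elim x₁ x₂)
  have hw1_cs : (w1 ⬝ᵥ S13) ^ 2 ≤ w1 ⬝ᵥ (S11 *ᵥ w1) * S33 := by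
    simpa [sumElim_dotProduct_fromBlocks_mulVec_sumElim] using hcs w1 0
  have hws_cs : (ws ⬝ᵥ (S22 *ᵥ ws)) ^ 2 ≤ ws ⬝ᵥ (S22 *ᵥ ws) * S33 := by
    simpa [sumElim_dotProduct_fromBlocks_mulVec_sumElim, hS22ws] using hcs 0 ws
  have hwsS33 : ws ⬝ᵥ (S22 *ᵥ ws) ≤ S33 := le_of_mul_le_mul_left (by nlinarith) hwspos
  rw [dotProduct_sub]
  linarith [sub_lt_sub_of_sqrt_div_sqrt_lt hw1pos hwspos hbound hwsS33 hw1_cs hcorr]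

/-- Under `w₁ᵀΣ₁₁w₁ ≤ Σ₃₃`, `w₁ᵀΣ₁₃ ≥ 0`, `(w*)ᵀΣ₂₂w* > 0` and the correlation
condition `ρ(w₁ᵀx₁,(w*)ᵀx₂) > ρ((w*)ᵀx₂,y)`, the quantity
`w₁ᵀ(Σ₁₃ - Σ₁₂w*) - (Σ₃₃ - (w*)ᵀΣ₂₂w*)` is strictly negative.  The joint
covariance of `(x₁, x₂, y)` is positive semidefinite (centered jointly Gaussian). -/
theorem cch_condition_negative (p : ℕ)
    (S11 S12 S22 : Matrix (Fin p) (Fin p) ℝ) (hS22 : S22.PosDef)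
    (S13 S23 : Fin p → ℝ) (S33 : ℝ) (hS33 : 0 < S33)
    (hjoint : (Matrix.fromBlocks
        (Matrix.fromBlocks S11 S12 S12ᵀ S22)
        (Matrix.of fun i (_ : Unit) => Sum.elim S13 S23 i)
        (Matrix.of fun (_ : Unit) j => Sum.elim S13 S23 j)
        (Matrix.of fun (_ : Unit) (_ : Unit) => S33)).PosSemidef)
    (w1 : Fin p → ℝ) (hw1pos : 0 < w1 ⬝ᵥ (S11 *ᵥ w1))
    (ws : Fin p → ℝ) (hws : ws = S22⁻¹ *ᵥ S23)
    (hbound : w1 ⬝ᵥ (S11 *ᵥ w1) ≤ S33)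
    (hS13 : 0 ≤ w1 ⬝ᵥ S13)
    (hwspos : 0 < ws ⬝ᵥ (S22 *ᵥ ws))
    (hcorr : w1 ⬝ᵥ (S12 *ᵥ ws) /
        (Real.sqrt (w1 ⬝ᵥ (S11 *ᵥ w1)) * Real.sqrt (ws ⬝ᵥ (S22 *ᵥ ws)))
      > Real.sqrt (ws ⬝ᵥ (S22 *ᵥ ws)) / Real.sqrt S33) :
    w1 ⬝ᵥ (S13 - S12 *ᵥ ws) - (S33 - ws ⬝ᵥ (S22 *ᵥ ws)) < 0 :=
  cch_condition_negative_general p S11 S12 S22 hS22 S13 S23 S33 hjoint w1 hw1pos ws hws hbound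
    hwspos hcorr
end

section
/- Let σ₁₂, σ₁₃, σ₂₃ ∈ (-1,1). The block matrix M = [[I_p, σ₁₂ I_p, σ₁₃ 𝟙_p],[σ₁₂ I_p, I_p, σ₂₃ 𝟙_p],[σ₁₃ 𝟙_pᵀ, σ₂₃ 𝟙_pᵀ, 1]] (size (2p+1)×(2p+1)) satisfies M ⪰ 0 if and only if (1-σ₁₂²) > 0 and 1 - p(σ₁₃² - 2σ₁₂σ₁₃σ₂₃ + σ₂₃²)/(1-σ₁₂²) ≥ 0. -/
open Matrix

-- per-coordinate quadratic form expansion lemma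
lemma synth_quad (p : ℕ) (σ₁₂ σ₁₃ σ₂₃ : ℝ) (x : ((Fin p ⊕ Fin p) ⊕ Unit) → ℝ) :
    dotProduct (star x) ((Matrix.fromBlocks
        (Matrix.fromBlocks (1 : Matrix (Fin p) (Fin p) ℝ) (σ₁₂ • (1 : Matrix (Fin p) (Fin p) ℝ))
          (σ₁₂ • (1 : Matrix (Fin p) (Fin p) ℝ)) (1 : Matrix (Fin p) (Fin p) ℝ))
        (Matrix.of fun i (_ : Unit) => Sum.elim (fun (_ : Fin p) => σ₁₃) (fun (_ : Fin p) => σ₂₃) i)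
        (Matrix.of fun (_ : Unit) j => Sum.elim (fun (_ : Fin p) => σ₁₃) (fun (_ : Fin p) => σ₂₃) j)
        (Matrix.of fun (_ : Unit) (_ : Unit) => (1 : ℝ))) *ᵥ x)
    = (∑ i : Fin p,
        (x (Sum.inl (Sum.inl i)) * x (Sum.inl (Sum.inl i))
         + x (Sum.inl (Sum.inr i)) * (σ₁₂ * x (Sum.inl (Sum.inl i)))
         + x (Sum.inr ()) * (σ₁₃ * x (Sum.inl (Sum.inl i)))
         + x (Sum.inl (Sum.inl i)) * (σ₁₂ * x (Sum.inl (Sum.inr i)))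
         + x (Sum.inl (Sum.inr i)) * x (Sum.inl (Sum.inr i))
         + x (Sum.inr ()) * (σ₂₃ * x (Sum.inl (Sum.inr i)))
         + x (Sum.inl (Sum.inl i)) * (σ₁₃ * x (Sum.inr ()))
         + x (Sum.inl (Sum.inr i)) * (σ₂₃ * x (Sum.inr ()))))
      + x (Sum.inr ()) * x (Sum.inr ()) := by
  simp [dotProduct, mulVec, Fintype.sum_sum_type, Matrix.fromBlocks, Matrix.one_apply,
    Finset.mul_sum, Finset.sum_add_distrib, mul_add]
  ring

/-- PSD criterion for the synthetic-data covariance matrix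
`M = [[I, σ₁₂I, σ₁₃𝟙],[σ₁₂I, I, σ₂₃𝟙],[σ₁₃𝟙ᵀ, σ₂₃𝟙ᵀ, 1]]`:
`M ⪰ 0` iff `1 - σ₁₂² > 0` and `1 - p(σ₁₃² - 2σ₁₂σ₁₃σ₂₃ + σ₂₃²)/(1-σ₁₂²) ≥ 0`. -/
theorem synthetic_covariance_psd_iff (p : ℕ) (σ₁₂ σ₁₃ σ₂₃ : ℝ)
    (h₁₂ : σ₁₂ ∈ Set.Ioo (-1 : ℝ) 1) (h₁₃ : σ₁₃ ∈ Set.Ioo (-1 : ℝ) 1)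
    (h₂₃ : σ₂₃ ∈ Set.Ioo (-1 : ℝ) 1) :
    (Matrix.fromBlocks
        (Matrix.fromBlocks (1 : Matrix (Fin p) (Fin p) ℝ) (σ₁₂ • (1 : Matrix (Fin p) (Fin p) ℝ))
          (σ₁₂ • (1 : Matrix (Fin p) (Fin p) ℝ)) (1 : Matrix (Fin p) (Fin p) ℝ))
        (Matrix.of fun i (_ : Unit) => Sum.elim (fun (_ : Fin p) => σ₁₃) (fun (_ : Fin p) => σ₂₃) i)
        (Matrix.of fun (_ : Unit) j => Sum.elim (fun (_ : Fin p) => σ₁₃) (fun (_ : Fin p) => σ₂₃) j)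
        (Matrix.of fun (_ : Unit) (_ : Unit) => (1 : ℝ))).PosSemidef
      ↔ (0 < 1 - σ₁₂ ^ 2 ∧
          0 ≤ 1 - (p : ℝ) * (σ₁₃ ^ 2 - 2 * σ₁₂ * σ₁₃ * σ₂₃ + σ₂₃ ^ 2) / (1 - σ₁₂ ^ 2)) := by
  obtain ⟨hl, hr⟩ := h₁₂
  have hc : 0 < 1 - σ₁₂ ^ 2 := by nlinarith
  set c : ℝ := 1 - σ₁₂ ^ 2 with hcdef
  have hc0 : c ≠ 0 := ne_of_gt hc
  set d : ℝ := σ₂₃ - σ₁₂ * σ₁₃ with hddef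
  set m : ℝ := σ₁₃ ^ 2 - 2 * σ₁₂ * σ₁₃ * σ₂₃ + σ₂₃ ^ 2 with hmdef
  -- key completion-of-squares identity
  have key : ∀ x : ((Fin p ⊕ Fin p) ⊕ Unit) → ℝ,
      c * dotProduct (star x) ((Matrix.fromBlocks
        (Matrix.fromBlocks (1 : Matrix (Fin p) (Fin p) ℝ) (σ₁₂ • (1 : Matrix (Fin p) (Fin p) ℝ))
          (σ₁₂ • (1 : Matrix (Fin p) (Fin p) ℝ)) (1 : Matrix (Fin p) (Fin p) ℝ))
        (Matrix.of fun i (_ : Unit) => Sum.elim (fun (_ : Fin p) => σ₁₃) (fun (_ : Fin p) => σ₂₃) i)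
        (Matrix.of fun (_ : Unit) j => Sum.elim (fun (_ : Fin p) => σ₁₃) (fun (_ : Fin p) => σ₂₃) j)
        (Matrix.of fun (_ : Unit) (_ : Unit) => (1 : ℝ))) *ᵥ x)
      = (∑ i : Fin p, c * (x (Sum.inl (Sum.inl i)) + σ₁₂ * x (Sum.inl (Sum.inr i))
            + σ₁₃ * x (Sum.inr ())) ^ 2)
        + (∑ i : Fin p, (c * x (Sum.inl (Sum.inr i)) + d * x (Sum.inr ())) ^ 2)
        + (c - p * m) * x (Sum.inr ()) ^ 2 := by
    intro x
    rw [synth_quad, mul_add, Finset.mul_sum]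
    have per : ∀ i : Fin p,
        c * (x (Sum.inl (Sum.inl i)) * x (Sum.inl (Sum.inl i))
         + x (Sum.inl (Sum.inr i)) * (σ₁₂ * x (Sum.inl (Sum.inl i)))
         + x (Sum.inr ()) * (σ₁₃ * x (Sum.inl (Sum.inl i)))
         + x (Sum.inl (Sum.inl i)) * (σ₁₂ * x (Sum.inl (Sum.inr i)))
         + x (Sum.inl (Sum.inr i)) * x (Sum.inl (Sum.inr i))
         + x (Sum.inr ()) * (σ₂₃ * x (Sum.inl (Sum.inr i)))
         + x (Sum.inl (Sum.inl i)) * (σ₁₃ * x (Sum.inr ()))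
         + x (Sum.inl (Sum.inr i)) * (σ₂₃ * x (Sum.inr ())))
        = c * (x (Sum.inl (Sum.inl i)) + σ₁₂ * x (Sum.inl (Sum.inr i))
            + σ₁₃ * x (Sum.inr ())) ^ 2
          + (c * x (Sum.inl (Sum.inr i)) + d * x (Sum.inr ())) ^ 2
          + (-(m * x (Sum.inr ()) ^ 2)) := by
      intro i; rw [hcdef, hddef, hmdef]; ring
    rw [Finset.sum_congr rfl fun i _ => per i, Finset.sum_add_distrib, Finset.sum_add_distrib,
      Finset.sum_const, Finset.card_fin, nsmul_eq_mul]
    ring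
  rw [Matrix.posSemidef_iff_dotProduct_mulVec]
  constructor
  · rintro ⟨-, hq⟩
    refine ⟨hc, ?_⟩
    set a : ℝ := -(σ₁₃ - σ₁₂ * σ₂₃) / c with hadef
    set b : ℝ := -d / c with hbdef
    set x : ((Fin p ⊕ Fin p) ⊕ Unit) → ℝ :=
      Sum.elim (Sum.elim (fun _ => a) (fun _ => b)) (fun _ => 1) with hxdef
    have h1 : ∀ i : Fin p, x (Sum.inl (Sum.inl i)) + σ₁₂ * x (Sum.inl (Sum.inr i))
        + σ₁₃ * x (Sum.inr ()) = 0 := by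
      intro i
      show a + σ₁₂ * b + σ₁₃ * 1 = 0
      rw [hadef, hbdef, hddef]
      field_simp
      ring
    have h2 : ∀ i : Fin p, c * x (Sum.inl (Sum.inr i)) + d * x (Sum.inr ()) = 0 := by
      intro i
      show c * b + d * 1 = 0
      rw [hbdef]
      field_simp
      ring
    have hk := key x
    simp only [h1, h2] at hk
    have hx1 : x (Sum.inr ()) = (1 : ℝ) := rfl
    rw [hx1] at hk
    norm_num at hk
    have he : 0 ≤ c - (p : ℝ) * m := hk ▸ mul_nonneg hc.le (hq x)
    have hrw : 1 - (p : ℝ) * m / c = (c - (p : ℝ) * m) / c := by field_simp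
    rw [hrw]
    positivity
  · rintro ⟨-, hcond⟩
    have he : 0 ≤ c - (p : ℝ) * m := by
      have h0 : 0 ≤ c * (1 - (p : ℝ) * m / c) := mul_nonneg hc.le hcond
      have hrw : c * (1 - (p : ℝ) * m / c) = c - (p : ℝ) * m := by
        field_simp
      rw [hrw] at h0
      exact h0
    constructor
    · apply Matrix.IsHermitian.fromBlocks
      · apply Matrix.IsHermitian.fromBlocks
        · exact Matrix.isHermitian_one
        · ext i j; simp [Matrix.conjTranspose_apply, Matrix.one_apply, eq_comm]
        · exact Matrix.isHermitian_one
      · ext i j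
        rcases j with j | j <;> simp [Matrix.conjTranspose_apply]
      · ext i j; simp
    · intro x
      refine (mul_nonneg_iff_of_pos_left hc).mp ?_
      rw [key x]
      have s1 : 0 ≤ ∑ i : Fin p, c * (x (Sum.inl (Sum.inl i)) + σ₁₂ * x (Sum.inl (Sum.inr i))
          + σ₁₃ * x (Sum.inr ())) ^ 2 :=
        Finset.sum_nonneg fun i _ => mul_nonneg hc.le (sq_nonneg _)
      have s2 : 0 ≤ ∑ i : Fin p, (c * x (Sum.inl (Sum.inr i)) + d * x (Sum.inr ())) ^ 2 :=
        Finset.sum_nonneg fun i _ => sq_nonneg _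
      have s3 : 0 ≤ (c - (p : ℝ) * m) * x (Sum.inr ()) ^ 2 := mul_nonneg he (sq_nonneg _)
      linarith
end

section
/- In the special case Σ₁₃ = Σ₁₂Σ₂₂⁻¹Σ₂₃ (conditional independence of x₁ and y given x₂), the stationarity equation λ[Σ₁₂ᵀΣ₂₂⁻¹Σ₁₂ + (1/(κ-1))(Σ₁₁ - Σ₁₂Σ₂₂⁻¹Σ₁₂ᵀ)]w₁ = λΣ₁₂ᵀw* has solution w₁ = (κ-1)(Σ₁₁ + (κ-2)Σ₁₂Σ₂₂⁻¹Σ₁₂ᵀ)⁻¹ Σ₁₂ᵀw* for every λ > 0, i.e., the optimal teacher weight is independent of λ (assuming Σ₁₁ + (κ-2)Σ₁₂Σ₂₂⁻¹Σ₁₂ᵀ is invertible; note Σ₁₂ᵀΣ₂₂⁻¹Σ₁₂ is replaced consistently by Σ₁₂Σ₂₂⁻¹Σ₁₂ᵀ under symmetry of Σ₁₂). -/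
open Matrix

/-- In the conditional-independence case `Σ₁₃ = Σ₁₂Σ₂₂⁻¹Σ₂₃`, the stationarity equation
`λ[Σ₁₂ᵀΣ₂₂⁻¹Σ₁₂ + (1/(κ-1))(Σ₁₁-Σ₁₂Σ₂₂⁻¹Σ₁₂ᵀ)]w₁ = λΣ₁₂ᵀw*` is solved, for every
`λ > 0`, by `w₁ = (κ-1)(Σ₁₁+(κ-2)Σ₁₂Σ₂₂⁻¹Σ₁₂ᵀ)⁻¹Σ₁₂ᵀw*` (assuming
`Σ₁₁+(κ-2)Σ₁₂Σ₂₂⁻¹Σ₁₂ᵀ` invertible and `Σ₁₂` symmetric so that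
`Σ₁₂ᵀΣ₂₂⁻¹Σ₁₂ = Σ₁₂Σ₂₂⁻¹Σ₁₂ᵀ`); in particular the solution is independent of `λ`. -/
theorem conditional_independence_solution (p : ℕ)
    (S11 S12 S22 : Matrix (Fin p) (Fin p) ℝ)
    (hS22 : S22.PosDef) (hS12sym : S12.IsSymm)
    (S13 S23 : Fin p → ℝ) (ws : Fin p → ℝ) (hws : ws = S22⁻¹ *ᵥ S23)
    (κ : ℝ) (hκ : 1 < κ)
    (hCI : S13 = S12 *ᵥ (S22⁻¹ *ᵥ S23))
    (hinv : IsUnit (S11 + (κ - 2) • (S12 * S22⁻¹ * S12ᵀ)).det)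
    (w1 : Fin p → ℝ)
    (hw1 : w1 = (κ - 1) • ((S11 + (κ - 2) • (S12 * S22⁻¹ * S12ᵀ))⁻¹ *ᵥ (S12ᵀ *ᵥ ws))) :
    ∀ lam : ℝ, 0 < lam →
      lam • ((S12ᵀ * S22⁻¹ * S12 + (1 / (κ - 1)) • (S11 - S12 * S22⁻¹ * S12ᵀ)) *ᵥ w1)
        = lam • (S12ᵀ *ᵥ ws) := by
  intro lam hlam
  have h12 : S12ᵀ = S12 := hS12sym
  have hk : κ - 1 ≠ 0 := by linarith
  set A := S11 + (κ - 2) • (S12 * S22⁻¹ * S12ᵀ) with hA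
  have hAinv : A * A⁻¹ = 1 := Matrix.mul_nonsing_inv _ hinv
  have key : S12ᵀ * S22⁻¹ * S12 + (1 / (κ - 1)) • (S11 - S12 * S22⁻¹ * S12ᵀ)
      = (1 / (κ - 1)) • A := by
    rw [hA, h12]
    ext i j
    simp only [Matrix.add_apply, Matrix.sub_apply, Matrix.smul_apply, smul_eq_mul]
    field_simp
    ring
  rw [key, hw1]
  congr 1
  rw [smul_mulVec, mulVec_smul, smul_smul, one_div, inv_mul_cancel₀ hk, one_smul,
    mulVec_mulVec, hAinv, one_mulVec]
end
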